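/- arXiv:1807.02766 — 4 statements merged into one kernel-verified Lean document; each statement's English description precedes it below -/
import Mathlib

section
/- For σ ∈ I_{n,k}, the set of predecessors of σ has exactly 2(b(σ)+c(σ)) elements. In particular, if b(σ)+c(σ) = k, then σ has exactly 2k predecessors. -/
/- Link patterns: an involution in `I_{n,k}` (k disjoint 2-cycles in S_n) is identified
with its set of arcs, a finset of pairs `(i,j)` with `1 ≤ i < j ≤ n`, pairwise disjoint
endpoints, of cardinality `k`. -/

attribute [local instance] Classical.propDecidable

namespace LinkPatterns

/-- `σ` is a link pattern on the points `1,…,n`: each arc `(i,j)` satisfies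
`1 ≤ i < j ≤ n` and distinct arcs have pairwise distinct endpoints. -/
def IsLinkPattern (n : ℕ) (σ : Finset (ℕ × ℕ)) : Prop :=
  (∀ p ∈ σ, 1 ≤ p.1 ∧ p.1 < p.2 ∧ p.2 ≤ n) ∧
  (∀ p ∈ σ, ∀ q ∈ σ, p ≠ q → p.1 ≠ q.1 ∧ p.1 ≠ q.2 ∧ p.2 ≠ q.1 ∧ p.2 ≠ q.2)

/-- The fixed points `σ⁰` of a link pattern on `1,…,n`. -/
noncomputable def fixedPts (n : ℕ) (σ : Finset (ℕ × ℕ)) : Finset ℕ :=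
  (Finset.Icc 1 n).filter (fun f => ∀ p ∈ σ, p.1 ≠ f ∧ p.2 ≠ f)

/-- `c(σ)`: the number of crossings, i.e. of pairs of arcs `(i,j),(i',j')` with
`i < i' < j < j'`. -/
noncomputable def crossings (σ : Finset (ℕ × ℕ)) : ℕ :=
  ((σ ×ˢ σ).filter (fun q => q.1.1 < q.2.1 ∧ q.2.1 < q.1.2 ∧ q.1.2 < q.2.2)).card

/-- `b(σ)`: the number of pairs (arc, fixed point) with the fixed point strictly
under the arc. -/
noncomputable def bridges (n : ℕ) (σ : Finset (ℕ × ℕ)) : ℕ :=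
  ((σ ×ˢ fixedPts n σ).filter (fun q => q.1.1 < q.2 ∧ q.2 < q.1.2)).card

/-- `R_{[a,b]}(σ)`: the number of arcs `(i,j) ∈ σ` with `a ≤ i < j ≤ b`. -/
noncomputable def RInt (σ : Finset (ℕ × ℕ)) (a b : ℕ) : ℕ :=
  (σ.filter (fun p => a ≤ p.1 ∧ p.2 ≤ b)).card

/-- The partial order: `υ ≤ σ` iff `R_{[a,b]}(υ) ≤ R_{[a,b]}(σ)` for all `1 ≤ a < b ≤ n`. -/
def lpLE (n : ℕ) (υ σ : Finset (ℕ × ℕ)) : Prop :=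
  ∀ a b : ℕ, 1 ≤ a → a < b → b ≤ n → RInt υ a b ≤ RInt σ a b

/-- `σ'` is a predecessor of `σ`, i.e. is obtained from `σ` by an elementary move
forward (of first or second type). -/
def IsPredecessor (n : ℕ) (σ' σ : Finset (ℕ × ℕ)) : Prop :=
  (∃ i j f : ℕ, (i, j) ∈ σ ∧ f ∈ fixedPts n σ ∧ i < f ∧ f < j ∧
    (σ' = insert (i, f) (σ.erase (i, j)) ∨ σ' = insert (f, j) (σ.erase (i, j)))) ∨
  (∃ i j l m : ℕ, (i, j) ∈ σ ∧ (l, m) ∈ σ ∧ i < l ∧ l < j ∧ j < m ∧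
    (σ' = insert (i, l) (insert (j, m) ((σ.erase (i, j)).erase (l, m))) ∨
     σ' = insert (i, m) (insert (l, j) ((σ.erase (i, j)).erase (l, m)))))

/-- All finsets of pairs of points of `1,…,n`: an ambient finite set in which all link
patterns on `1,…,n` live. -/
noncomputable def allSub (n : ℕ) : Finset (Finset (ℕ × ℕ)) :=
  (Finset.Icc 1 n ×ˢ Finset.Icc 1 n).powerset

/-- `a_{σ,υ}`: the number of `ω ∈ I_{n,k}` with `ω ≤ σ` such that `ω` is a predecessor
of `υ` or `υ` is a predecessor of `ω` (the number of edges at `υ` in the graph `G_σ`). -/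
noncomputable def aNum (n k : ℕ) (σ υ : Finset (ℕ × ℕ)) : ℕ :=
  ((allSub n).filter (fun ω => IsLinkPattern n ω ∧ ω.card = k ∧ lpLE n ω σ ∧
    (IsPredecessor n ω υ ∨ IsPredecessor n υ ω))).card

/-- `p_σ := C(n-k,2) - C(n-2k,2) - b(σ) - c(σ)`. -/
noncomputable def pNum (n k : ℕ) (σ : Finset (ℕ × ℕ)) : ℕ :=
  Nat.choose (n - k) 2 - Nat.choose (n - 2 * k) 2 - bridges n σ - crossings σ

/-- `σ ∈ I_{n,k}^max`: a link pattern with no crossings and no fixed point under an arc. -/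
def IsMaximal (n : ℕ) (σ : Finset (ℕ × ℕ)) : Prop :=
  IsLinkPattern n σ ∧ bridges n σ = 0 ∧ crossings σ = 0

/-- `υ` is a singular point of `σ`: `a_{σ,υ} > p_σ`. -/
def IsSingularPt (n k : ℕ) (σ υ : Finset (ℕ × ℕ)) : Prop :=
  pNum n k σ < aNum n k σ υ

/-- `υ ∈ Sing(σ)`: `υ ∈ I_{n,k}`, `υ ≤ σ`, `υ` is a singular point of `σ`, and `υ` is
maximal w.r.t. `≤` among the singular points of `σ`. -/
def InSing (n k : ℕ) (σ υ : Finset (ℕ × ℕ)) : Prop :=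
  IsLinkPattern n υ ∧ υ.card = k ∧ lpLE n υ σ ∧ IsSingularPt n k σ υ ∧
  ∀ ω : Finset (ℕ × ℕ), IsLinkPattern n ω → ω.card = k → lpLE n ω σ →
    IsSingularPt n k σ ω → lpLE n υ ω → ω = υ

/-- `τ*(σ)`: the set of minimal arcs `(i,i+1)` of `σ`. -/
noncomputable def tauStar (σ : Finset (ℕ × ℕ)) : Finset (ℕ × ℕ) :=
  σ.filter (fun p => p.2 = p.1 + 1)

/-- `ρ(σ)` for `σ ∈ I_{n,k}^max`. -/
noncomputable def rho (n : ℕ) (σ : Finset (ℕ × ℕ)) : ℕ :=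
  if 1 ∈ fixedPts n σ ∧ n ∈ fixedPts n σ then (tauStar σ).card + 2
  else if 1 ∈ fixedPts n σ ∨ n ∈ fixedPts n σ ∨ (1, n) ∈ σ then (tauStar σ).card + 1
  else (tauStar σ).card

/-- The extraction `σ̃^{(i,i+1)}`: delete the arc `(i,i+1)` together with the points
`i, i+1` and renumber the remaining points. -/
noncomputable def extract (i : ℕ) (σ : Finset (ℕ × ℕ)) : Finset (ℕ × ℕ) :=
  (σ.erase (i, i + 1)).image
    (fun p => (if p.1 < i then p.1 else p.1 - 2, if p.2 < i then p.2 else p.2 - 2))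

/-- `σ₊ₐ`: shift every point of `σ` by `a`. -/
noncomputable def shiftBy (a : ℕ) (σ : Finset (ℕ × ℕ)) : Finset (ℕ × ℕ) :=
  σ.image (fun p => (p.1 + a, p.2 + a))

/-- The projection `π_{a,b}(σ)` renumbered to a link pattern on `1,…,b-a+1`. -/
noncomputable def proj (a b : ℕ) (σ : Finset (ℕ × ℕ)) : Finset (ℕ × ℕ) :=
  (σ.filter (fun p => a ≤ p.1 ∧ p.2 ≤ b)).image
    (fun p => (p.1 - (a - 1), p.2 - (a - 1)))

/-- The arc `p` lies over the arc `(i,j)`: `p.1 < i < j < p.2`. -/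
def ArcOver (p : ℕ × ℕ) (i j : ℕ) : Prop := p.1 < i ∧ j < p.2

/-- The pair of arcs `(i,j),(i',j')` of `σ` is admissible at `[1,n]`. -/
def AdmissiblePair (n : ℕ) (σ : Finset (ℕ × ℕ)) (i j i' j' : ℕ) : Prop :=
  (i, j) ∈ σ ∧ (i', j') ∈ σ ∧
  1 < i ∧ i < j ∧ j < i' ∧ i' < j' ∧ j' < n ∧
  1 ∈ fixedPts n σ ∧ n ∈ fixedPts n σ ∧
  (∀ f ∈ fixedPts n σ, f ≠ 1 → f ≠ n → j ≤ f ∧ f ≤ i') ∧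
  (∀ p ∈ σ, ¬(p.1 < i ∧ i < p.2 ∧ p.2 < j) ∧ ¬(i < p.1 ∧ p.1 < j ∧ j < p.2) ∧
            ¬(p.1 < i' ∧ i' < p.2 ∧ p.2 < j') ∧ ¬(i' < p.1 ∧ p.1 < j' ∧ j' < p.2)) ∧
  (∀ p ∈ σ, (ArcOver p i j ∨ ArcOver p i' j') → (p.1 < i ∧ j' < p.2)) ∧
  (∀ p ∈ σ, ∀ q ∈ σ, (p.1 < i ∧ j' < p.2) → (q.1 < i ∧ j' < q.2) →
      p.1 < q.1 → q.2 < p.2) ∧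
  ((fixedPts n σ).filter (fun f => j ≤ f ∧ f ≤ i')).card *
    (σ.filter (fun p => p.1 < i ∧ j' < p.2)).card = 0

/-! ### Auxiliary material for STATEMENT 0 -/

/-- The map producing a predecessor from a (arc, fixed pt) or (crossing pair) datum
with a boolean choice. -/
noncomputable def gmap (σ : Finset (ℕ × ℕ)) :
    (((ℕ × ℕ) × ℕ) ⊕ ((ℕ × ℕ) × (ℕ × ℕ))) × Bool → Finset (ℕ × ℕ)
  | (Sum.inl pf, false) => insert (pf.1.1, pf.2) (σ.erase pf.1)
  | (Sum.inl pf, true) => insert (pf.2, pf.1.2) (σ.erase pf.1)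
  | (Sum.inr pq, false) =>
      insert (pq.1.1, pq.2.1) (insert (pq.1.2, pq.2.2) ((σ.erase pq.1).erase pq.2))
  | (Sum.inr pq, true) =>
      insert (pq.1.1, pq.2.2) (insert (pq.2.1, pq.1.2) ((σ.erase pq.1).erase pq.2))

lemma sdiff_ins_erase {σ : Finset (ℕ × ℕ)} {a b : ℕ × ℕ} (hb : b ∈ σ) (ha : a ∉ σ) :
    σ \ insert a (σ.erase b) = {b} ∧ insert a (σ.erase b) \ σ = {a} := by
  constructor <;> ext x <;>
    simp only [Finset.mem_sdiff, Finset.mem_insert, Finset.mem_erase, Finset.mem_singleton]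
  · constructor
    · rintro ⟨hx, h⟩
      push_neg at h
      by_contra hxb
      exact h.2 hxb hx
    · rintro rfl
      refine ⟨hb, ?_⟩
      rintro (rfl | ⟨hbb, -⟩)
      exacts [ha hb, hbb rfl]
  · constructor
    · rintro ⟨h1 | ⟨-, hx⟩, h2⟩
      exacts [h1, absurd hx h2]
    · rintro rfl
      exact ⟨Or.inl rfl, ha⟩

lemma sdiff_ins_erase2 {σ : Finset (ℕ × ℕ)} {a a' b b' : ℕ × ℕ}
    (hb : b ∈ σ) (hb' : b' ∈ σ) (ha : a ∉ σ) (ha' : a' ∉ σ) :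
    σ \ insert a (insert a' ((σ.erase b).erase b')) = {b, b'} ∧
    insert a (insert a' ((σ.erase b).erase b')) \ σ = {a, a'} := by
  constructor <;> ext x <;>
    simp only [Finset.mem_sdiff, Finset.mem_insert, Finset.mem_erase, Finset.mem_singleton]
  · constructor
    · rintro ⟨hx, h⟩
      push_neg at h
      by_contra hxb
      push_neg at hxb
      exact h.2.2 hxb.2 hxb.1 hx
    · rintro (rfl | rfl)
      · refine ⟨hb, ?_⟩
        rintro (rfl | rfl | ⟨-, hbb, -⟩)
        exacts [ha hb, ha' hb, hbb rfl]
      · refine ⟨hb', ?_⟩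
        rintro (rfl | rfl | ⟨hbb, -, -⟩)
        exacts [ha hb', ha' hb', hbb rfl]
  · constructor
    · rintro ⟨h1 | h1 | ⟨-, -, hx⟩, h2⟩
      exacts [Or.inl h1, Or.inr h1, absurd hx h2]
    · rintro (rfl | rfl)
      exacts [⟨Or.inl rfl, ha⟩, ⟨Or.inr (Or.inl rfl), ha'⟩]

lemma notmem_of_fixed {n : ℕ} {σ : Finset (ℕ × ℕ)} {f : ℕ}
    (hf : f ∈ fixedPts n σ) (a : ℕ) : (a, f) ∉ σ ∧ (f, a) ∉ σ := by
  have h := (Finset.mem_filter.mp hf).2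
  exact ⟨fun hmem => (h _ hmem).2 rfl, fun hmem => (h _ hmem).1 rfl⟩

lemma notmem_of_cross {n : ℕ} {σ : Finset (ℕ × ℕ)} (hσ : IsLinkPattern n σ)
    {p q : ℕ × ℕ} (hp : p ∈ σ) (hq : q ∈ σ)
    (h1 : p.1 < q.1) (h2 : q.1 < p.2) (h3 : p.2 < q.2) :
    (p.1, q.1) ∉ σ ∧ (p.2, q.2) ∉ σ ∧ (p.1, q.2) ∉ σ ∧ (q.1, p.2) ∉ σ := by
  have hp12 : p.1 < p.2 := (hσ.1 p hp).2.1
  refine ⟨fun h => ?_, fun h => ?_, fun h => ?_, fun h => ?_⟩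
  · by_cases he : (p.1, q.1) = p
    · exact absurd (congrArg Prod.snd he) (by simpa using h2.ne)
    · exact (hσ.2 _ h p hp he).1 rfl
  · by_cases he : (p.2, q.2) = p
    · exact absurd (congrArg Prod.fst he) (by simpa using hp12.ne')
    · exact (hσ.2 _ h p hp he).2.1 rfl
  · by_cases he : (p.1, q.2) = p
    · exact absurd (congrArg Prod.snd he) (by simpa using h3.ne')
    · exact (hσ.2 _ h p hp he).1 rfl
  · by_cases he : (q.1, p.2) = q
    · exact absurd (congrArg Prod.snd he) (by simpa using h3.ne)
    · exact (hσ.2 _ h q hq he).1 rfl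

lemma subset_grid {n : ℕ} {σ : Finset (ℕ × ℕ)} (hσ : IsLinkPattern n σ) :
    σ ⊆ Finset.Icc 1 n ×ˢ Finset.Icc 1 n := by
  intro p hp
  obtain ⟨h1, h2, h3⟩ := hσ.1 p hp
  simp only [Finset.mem_product, Finset.mem_Icc]
  exact ⟨⟨h1, le_trans h2.le h3⟩, ⟨le_trans h1 h2.le, h3⟩⟩

lemma pair_eq_pair {p q p' q' : ℕ × ℕ} (hpq : p.1 < q.1) (hpq' : p'.1 < q'.1)
    (h : ({p, q} : Finset (ℕ × ℕ)) = {p', q'}) : p = p' ∧ q = q' := by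
  have hp : p ∈ ({p', q'} : Finset (ℕ × ℕ)) := h ▸ Finset.mem_insert_self p {q}
  have hq : q ∈ ({p', q'} : Finset (ℕ × ℕ)) := h ▸ (by simp : q ∈ ({p, q} : Finset (ℕ × ℕ)))
  simp only [Finset.mem_insert, Finset.mem_singleton] at hp hq
  rcases hp with rfl | rfl
  · rcases hq with rfl | rfl
    · exact absurd hpq (lt_irrefl _)
    · exact ⟨rfl, rfl⟩
  · rcases hq with rfl | rfl
    · exact absurd (hpq.trans hpq') (lt_irrefl _)
    · exact absurd hpq (lt_irrefl _)

/-- For `σ ∈ I_{n,k}`, the set of predecessors of `σ` has exactly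
`2(b(σ)+c(σ))` elements; in particular, if `b(σ)+c(σ) = k`, then `σ` has exactly `2k`
predecessors. -/
theorem predecessors_card (n k : ℕ) (hnk : 2 * k ≤ n) (σ : Finset (ℕ × ℕ))
    (hσ : IsLinkPattern n σ) (hσk : σ.card = k) :
    ((allSub n).filter (fun σ' => IsPredecessor n σ' σ)).card
      = 2 * (bridges n σ + crossings σ) ∧
    (bridges n σ + crossings σ = k →
      ((allSub n).filter (fun σ' => IsPredecessor n σ' σ)).card = 2 * k) := by
  classical
  set B := (σ ×ˢ fixedPts n σ).filter (fun q => q.1.1 < q.2 ∧ q.2 < q.1.2) with hB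
  set C := (σ ×ˢ σ).filter (fun q => q.1.1 < q.2.1 ∧ q.2.1 < q.1.2 ∧ q.1.2 < q.2.2) with hC
  have hBmem : ∀ {p : ℕ × ℕ} {f : ℕ}, (p, f) ∈ B →
      p ∈ σ ∧ f ∈ fixedPts n σ ∧ p.1 < f ∧ f < p.2 := by
    intro p f h
    rw [hB] at h
    simp only [Finset.mem_filter, Finset.mem_product] at h
    exact ⟨h.1.1, h.1.2, h.2.1, h.2.2⟩
  have hCmem : ∀ {p q : ℕ × ℕ}, (p, q) ∈ C →
      p ∈ σ ∧ q ∈ σ ∧ p.1 < q.1 ∧ q.1 < p.2 ∧ p.2 < q.2 := by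
    intro p q h
    rw [hC] at h
    simp only [Finset.mem_filter, Finset.mem_product] at h
    exact ⟨h.1.1, h.1.2, h.2.1, h.2.2.1, h.2.2.2⟩
  have dL : ∀ (p : ℕ × ℕ) (f : ℕ) (b : Bool), p ∈ σ → f ∈ fixedPts n σ →
      σ \ gmap σ (Sum.inl (p, f), b) = {p} ∧
      gmap σ (Sum.inl (p, f), b) \ σ = {cond b (f, p.2) (p.1, f)} := by
    intro p f b hp hf
    cases b
    · exact sdiff_ins_erase hp (notmem_of_fixed hf p.1).1
    · exact sdiff_ins_erase hp (notmem_of_fixed hf p.2).2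
  have dR : ∀ (p q : ℕ × ℕ) (b : Bool), p ∈ σ → q ∈ σ →
      p.1 < q.1 → q.1 < p.2 → p.2 < q.2 →
      σ \ gmap σ (Sum.inr (p, q), b) = {p, q} ∧
      gmap σ (Sum.inr (p, q), b) \ σ
        = {cond b (p.1, q.2) (p.1, q.1), cond b (q.1, p.2) (p.2, q.2)} := by
    intro p q b hp hq h1 h2 h3
    obtain ⟨n1, n2, n3, n4⟩ := notmem_of_cross hσ hp hq h1 h2 h3
    cases b
    · exact sdiff_ins_erase2 hp hq n1 n2
    · exact sdiff_ins_erase2 hp hq n3 n4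
  have hgrid := subset_grid hσ
  have hcard : ((Finset.disjSum B C) ×ˢ (Finset.univ : Finset Bool)).card
      = ((allSub n).filter (fun σ' => IsPredecessor n σ' σ)).card := by
    refine Finset.card_bij (fun x _ => gmap σ x) ?_ ?_ ?_
    · -- maps into the set of predecessors
      rintro ⟨s, b⟩ hx
      simp only [Finset.mem_product, Finset.mem_disjSum] at hx
      rcases hx with ⟨(⟨⟨p, f⟩, ha, rfl⟩ | ⟨⟨p, q⟩, ha, rfl⟩), -⟩
      · obtain ⟨hp, hf, h1, h2⟩ := hBmem ha
        have hgp := Finset.mem_product.mp (hgrid hp)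
        have hfI : f ∈ Finset.Icc 1 n := (Finset.mem_filter.mp hf).1
        refine Finset.mem_filter.mpr ⟨Finset.mem_powerset.mpr ?_, ?_⟩
        · cases b <;>
          · refine Finset.insert_subset_iff.mpr
              ⟨Finset.mem_product.mpr ⟨?_, ?_⟩, (Finset.erase_subset _ _).trans hgrid⟩
            · first | exact hgp.1 | exact hfI
            · first | exact hgp.2 | exact hfI
        · refine Or.inl ⟨p.1, p.2, f, by simpa using hp, hf, h1, h2, ?_⟩
          cases b
          · exact Or.inl (by simp [gmap])
          · exact Or.inr (by simp [gmap])
      · obtain ⟨hp, hq, g1, g2, g3⟩ := hCmem ha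
        have hgp := Finset.mem_product.mp (hgrid hp)
        have hgq := Finset.mem_product.mp (hgrid hq)
        refine Finset.mem_filter.mpr ⟨Finset.mem_powerset.mpr ?_, ?_⟩
        · cases b <;>
          · refine Finset.insert_subset_iff.mpr
              ⟨Finset.mem_product.mpr ⟨hgp.1, ?_⟩, Finset.insert_subset_iff.mpr
                ⟨Finset.mem_product.mpr ⟨?_, ?_⟩,
                  ((Finset.erase_subset _ _).trans (Finset.erase_subset _ _)).trans hgrid⟩⟩
            · first | exact hgq.1 | exact hgq.2
            · first | exact hgp.2 | exact hgq.1
            · first | exact hgq.2 | exact hgp.2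
        · refine Or.inr ⟨p.1, p.2, q.1, q.2, by simpa using hp, by simpa using hq,
            g1, g2, g3, ?_⟩
          cases b
          · exact Or.inl (by simp [gmap])
          · exact Or.inr (by simp [gmap])
    · -- injectivity
      rintro ⟨s1, b1⟩ hx1 ⟨s2, b2⟩ hx2 heq
      simp only [Finset.mem_product, Finset.mem_disjSum] at hx1 hx2
      rcases hx1 with ⟨(⟨⟨p, f⟩, ha1, rfl⟩ | ⟨⟨p, q⟩, ha1, rfl⟩), -⟩ <;>
        rcases hx2 with ⟨(⟨⟨p', f'⟩, ha2, rfl⟩ | ⟨⟨p', q'⟩, ha2, rfl⟩), -⟩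
      · obtain ⟨hp, hf, h1, h2⟩ := hBmem ha1
        obtain ⟨hp', hf', h1', h2'⟩ := hBmem ha2
        obtain ⟨dA, dB⟩ := dL p f b1 hp hf
        obtain ⟨dA', dB'⟩ := dL p' f' b2 hp' hf'
        have hpp : p = p' := by
          have : ({p} : Finset (ℕ × ℕ)) = {p'} := by rw [← dA, ← dA', heq]
          exact Finset.singleton_injective this
        subst hpp
        have hne : cond b1 (f, p.2) (p.1, f) = cond b2 (f', p.2) (p.1, f') := by
          have : ({cond b1 (f, p.2) (p.1, f)} : Finset (ℕ × ℕ))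
              = {cond b2 (f', p.2) (p.1, f')} := by rw [← dB, ← dB', heq]
          exact Finset.singleton_injective this
        cases b1 <;> cases b2 <;> simp only [cond, Prod.mk.injEq] at hne
        · obtain ⟨-, rfl⟩ := hne; rfl
        · exact absurd hne.2 h2.ne
        · exact absurd hne.2 h2'.ne'
        · obtain ⟨rfl, -⟩ := hne; rfl
      · obtain ⟨hp, hf, h1, h2⟩ := hBmem ha1
        obtain ⟨hp', hq', g1, g2, g3⟩ := hCmem ha2
        obtain ⟨dA, -⟩ := dL p f b1 hp hf
        obtain ⟨dA', -⟩ := dR p' q' b2 hp' hq' g1 g2 g3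
        have hset : ({p} : Finset (ℕ × ℕ)) = {p', q'} := by rw [← dA, ← dA', heq]
        have hps : p' = p := by
          have : p' ∈ ({p} : Finset (ℕ × ℕ)) := hset ▸ (by simp)
          simpa using this
        have hqs : q' = p := by
          have : q' ∈ ({p} : Finset (ℕ × ℕ)) := hset ▸ (by simp)
          simpa using this
        rw [hps, hqs] at g1
        exact absurd g1 (lt_irrefl _)
      · obtain ⟨hp, hq, g1, g2, g3⟩ := hCmem ha1
        obtain ⟨hp', hf', h1', h2'⟩ := hBmem ha2
        obtain ⟨dA, -⟩ := dR p q b1 hp hq g1 g2 g3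
        obtain ⟨dA', -⟩ := dL p' f' b2 hp' hf'
        have hset : ({p'} : Finset (ℕ × ℕ)) = {p, q} := by rw [← dA', ← dA, heq]
        have hps : p = p' := by
          have : p ∈ ({p'} : Finset (ℕ × ℕ)) := hset ▸ (by simp)
          simpa using this
        have hqs : q = p' := by
          have : q ∈ ({p'} : Finset (ℕ × ℕ)) := hset ▸ (by simp)
          simpa using this
        rw [hps, hqs] at g1
        exact absurd g1 (lt_irrefl _)
      · obtain ⟨hp, hq, g1, g2, g3⟩ := hCmem ha1
        obtain ⟨hp', hq', g1', g2', g3'⟩ := hCmem ha2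
        obtain ⟨dA, dB⟩ := dR p q b1 hp hq g1 g2 g3
        obtain ⟨dA', dB'⟩ := dR p' q' b2 hp' hq' g1' g2' g3'
        have hset : ({p, q} : Finset (ℕ × ℕ)) = {p', q'} := by rw [← dA, ← dA', heq]
        obtain ⟨hpp, hqq⟩ := pair_eq_pair g1 g1' hset
        subst hpp; subst hqq
        have hnew : ({cond b1 (p.1, q.2) (p.1, q.1), cond b1 (q.1, p.2) (p.2, q.2)} :
            Finset (ℕ × ℕ))
            = {cond b2 (p.1, q.2) (p.1, q.1), cond b2 (q.1, p.2) (p.2, q.2)} := by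
          rw [← dB, ← dB', heq]
        cases b1 <;> cases b2
        · rfl
        · exfalso
          simp only [cond] at hnew
          have : (p.1, q.1) ∈ ({(p.1, q.2), (q.1, p.2)} : Finset (ℕ × ℕ)) :=
            hnew ▸ (by simp)
          simp only [Finset.mem_insert, Finset.mem_singleton, Prod.mk.injEq] at this
          rcases this with ⟨-, h⟩ | ⟨h, -⟩
          · exact (g2.trans g3).ne h
          · exact g1.ne h
        · exfalso
          simp only [cond] at hnew
          have : (p.1, q.1) ∈ ({(p.1, q.2), (q.1, p.2)} : Finset (ℕ × ℕ)) :=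
            hnew.symm ▸ (by simp)
          simp only [Finset.mem_insert, Finset.mem_singleton, Prod.mk.injEq] at this
          rcases this with ⟨-, h⟩ | ⟨h, -⟩
          · exact (g2.trans g3).ne h
          · exact g1.ne h
        · rfl
    · -- surjectivity
      rintro σ' hσ'
      obtain ⟨-, hpred⟩ := Finset.mem_filter.mp hσ'
      rcases hpred with ⟨i, j, f, hij, hf, h1, h2, (rfl | rfl)⟩ |
        ⟨i, j, l, m, hij, hlm, g1, g2, g3, (rfl | rfl)⟩
      · refine ⟨(Sum.inl ((i, j), f), false), ?_, rfl⟩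
        exact Finset.mem_product.mpr
          ⟨Finset.inl_mem_disjSum.mpr (Finset.mem_filter.mpr
            ⟨Finset.mem_product.mpr ⟨hij, hf⟩, ⟨h1, h2⟩⟩), Finset.mem_univ _⟩
      · refine ⟨(Sum.inl ((i, j), f), true), ?_, rfl⟩
        exact Finset.mem_product.mpr
          ⟨Finset.inl_mem_disjSum.mpr (Finset.mem_filter.mpr
            ⟨Finset.mem_product.mpr ⟨hij, hf⟩, ⟨h1, h2⟩⟩), Finset.mem_univ _⟩
      · refine ⟨(Sum.inr ((i, j), (l, m)), false), ?_, rfl⟩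
        exact Finset.mem_product.mpr
          ⟨Finset.inr_mem_disjSum.mpr (Finset.mem_filter.mpr
            ⟨Finset.mem_product.mpr ⟨hij, hlm⟩, ⟨g1, g2, g3⟩⟩), Finset.mem_univ _⟩
      · refine ⟨(Sum.inr ((i, j), (l, m)), true), ?_, rfl⟩
        exact Finset.mem_product.mpr
          ⟨Finset.inr_mem_disjSum.mpr (Finset.mem_filter.mpr
            ⟨Finset.mem_product.mpr ⟨hij, hlm⟩, ⟨g1, g2, g3⟩⟩), Finset.mem_univ _⟩
  have base : ((allSub n).filter (fun σ' => IsPredecessor n σ' σ)).card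
      = 2 * (bridges n σ + crossings σ) := by
    rw [← hcard, Finset.card_product, Finset.card_disjSum, Finset.card_univ,
      Fintype.card_bool]
    show (bridges n σ + crossings σ) * 2 = 2 * (bridges n σ + crossings σ)
    exact mul_comm _ _
  exact ⟨base, fun hk => by rw [base, hk]⟩

end LinkPatterns
end

section
/- Let σ ∈ I_{n,k} with 2k < n, let f = max σ⁰, and let σ̂ = σ(f,n+1) ∈ I_{n+1,k+1} be the (0,1)-maximal completion of σ. Then for every predecessor σ' of σ there exists a fixed point g of σ' such that σ'(g,n+1) is a predecessor of σ̂; that is, every predecessor of σ lifts to a predecessor of σ̂ obtained from it by a (not necessarily maximal) completion. -/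
/- Link patterns: an involution in `I_{n,k}` (k disjoint 2-cycles in S_n) is identified
with its set of arcs, a finset of pairs `(i,j)` with `1 ≤ i < j ≤ n`, pairwise disjoint
endpoints, of cardinality `k`. -/

attribute [local instance] Classical.propDecidable

namespace LinkPatterns

/-- every predecessor of `σ` lifts, by a (not necessarily maximal)
completion, to a predecessor of the `(0,1)`-maximal completion `σ̂ = σ(max σ⁰, n+1)`. -/
theorem predecessor_lifts_to_completion (n k : ℕ) (σ : Finset (ℕ × ℕ))
    (hσ : IsLinkPattern n σ) (hσk : σ.card = k) (hnk : 2 * k < n)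
    (f : ℕ) (hf : f ∈ fixedPts n σ) (hfmax : ∀ g ∈ fixedPts n σ, g ≤ f)
    (σ' : Finset (ℕ × ℕ)) (hpred : IsPredecessor n σ' σ) :
    ∃ g ∈ fixedPts n σ', IsPredecessor (n + 1) (insert (g, n + 1) σ') (insert (f, n + 1) σ) := by
  obtain ⟨hb, hd⟩ := hσ
  rw [fixedPts, Finset.mem_filter, Finset.mem_Icc] at hf
  obtain ⟨⟨hf1, hfn⟩, hffix⟩ := hf
  have hfn1 : (f, n + 1) ∉ σ := fun h => by have := (hb _ h).2.2; omega
  rcases hpred with ⟨i, j, f', hij, hf', hif', hf'j, hcase⟩ |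
    ⟨i, j, l, m, hij, hlm, hil, hlj, hjm, hcase⟩
  · -- first type move
    rw [fixedPts, Finset.mem_filter, Finset.mem_Icc] at hf'
    obtain ⟨⟨hf'1, hf'n⟩, hf'fix⟩ := hf'
    obtain ⟨hi1, hijlt, hjn⟩ := hb _ hij
    have hne1 : ((f, n + 1) : ℕ × ℕ) ≠ (i, j) := by
      simp only [ne_eq, Prod.mk.injEq, not_and]; omega
    have herase : (insert (f, n + 1) σ).erase (i, j) = insert (f, n + 1) (σ.erase (i, j)) :=
      Finset.erase_insert_of_ne hne1
    have herase2 : (insert (f, n + 1) (σ.erase (i, j))).erase (f, n + 1) = σ.erase (i, j) :=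
      Finset.erase_insert (fun hmem => hfn1 (Finset.mem_of_mem_erase hmem))
    by_cases hff : f' = f
    · subst hff
      rcases hcase with h | h
      · -- σ' = insert (i, f') (σ.erase (i, j)); lift with g = j, second type move
        refine ⟨j, ?_, ?_⟩
        · subst h
          simp only [fixedPts, Finset.mem_filter, Finset.mem_Icc]
          refine ⟨⟨by omega, hjn⟩, ?_⟩
          intro p hp
          rcases Finset.mem_insert.mp hp with rfl | hp
          · exact ⟨by simp; omega, by simp; omega⟩
          · have h1 := hd p (Finset.mem_of_mem_erase hp) _ hij (Finset.ne_of_mem_erase hp)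
            exact ⟨h1.2.1, h1.2.2.2⟩
        · right
          refine ⟨i, j, f', n + 1, Finset.mem_insert_of_mem hij,
            Finset.mem_insert_self _ _, hif', hf'j, by omega, Or.inl ?_⟩
          rw [herase, herase2, h, Finset.insert_comm]
      · -- σ' = insert (f', j) (σ.erase (i, j)); lift with g = i, second type move
        refine ⟨i, ?_, ?_⟩
        · subst h
          simp only [fixedPts, Finset.mem_filter, Finset.mem_Icc]
          refine ⟨⟨hi1, by omega⟩, ?_⟩
          intro p hp
          rcases Finset.mem_insert.mp hp with rfl | hp
          · exact ⟨by simp; omega, by simp; omega⟩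
          · have h1 := hd p (Finset.mem_of_mem_erase hp) _ hij (Finset.ne_of_mem_erase hp)
            exact ⟨h1.1, h1.2.2.1⟩
        · right
          refine ⟨i, j, f', n + 1, Finset.mem_insert_of_mem hij,
            Finset.mem_insert_self _ _, hif', hf'j, by omega, Or.inr ?_⟩
          rw [herase, herase2, h, Finset.insert_comm]
    · -- f' ≠ f: f stays fixed in σ'; lift with g = f, same first type move
      have hfi : i ≠ f := (hffix _ hij).1
      have hfj : j ≠ f := (hffix _ hij).2
      refine ⟨f, ?_, ?_⟩
      · simp only [fixedPts, Finset.mem_filter, Finset.mem_Icc]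
        refine ⟨⟨hf1, hfn⟩, ?_⟩
        intro p hp
        rcases hcase with h | h <;> subst h <;>
          rcases Finset.mem_insert.mp hp with rfl | hp <;>
          first
          | exact ⟨by simpa using hfi, by simpa using hff⟩
          | exact ⟨by simpa using hff, by simpa using hfj⟩
          | exact hffix _ (Finset.mem_of_mem_erase hp)
      · left
        refine ⟨i, j, f', Finset.mem_insert_of_mem hij, ?_, hif', hf'j, ?_⟩
        · simp only [fixedPts, Finset.mem_filter, Finset.mem_Icc]
          refine ⟨⟨hf'1, by omega⟩, ?_⟩
          intro p hp
          rcases Finset.mem_insert.mp hp with rfl | hp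
          · exact ⟨by simp; omega, by simp; omega⟩
          · exact hf'fix _ hp
        · rcases hcase with h | h
          · exact Or.inl (by rw [herase, h, Finset.insert_comm])
          · exact Or.inr (by rw [herase, h, Finset.insert_comm])
  · -- second type move: fixed points unchanged; lift with g = f, same move
    obtain ⟨hi1, hijlt, hjn⟩ := hb _ hij
    obtain ⟨hl1, hlmlt, hmn⟩ := hb _ hlm
    have hne1 : ((f, n + 1) : ℕ × ℕ) ≠ (i, j) := by
      simp only [ne_eq, Prod.mk.injEq, not_and]; omega
    have hne2 : ((f, n + 1) : ℕ × ℕ) ≠ (l, m) := by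
      simp only [ne_eq, Prod.mk.injEq, not_and]; omega
    have herase : ((insert (f, n + 1) σ).erase (i, j)).erase (l, m)
        = insert (f, n + 1) ((σ.erase (i, j)).erase (l, m)) := by
      rw [Finset.erase_insert_of_ne hne1, Finset.erase_insert_of_ne hne2]
    have hfi : i ≠ f := (hffix _ hij).1
    have hfj : j ≠ f := (hffix _ hij).2
    have hfl : l ≠ f := (hffix _ hlm).1
    have hfm : m ≠ f := (hffix _ hlm).2
    refine ⟨f, ?_, ?_⟩
    · simp only [fixedPts, Finset.mem_filter, Finset.mem_Icc]
      refine ⟨⟨hf1, hfn⟩, ?_⟩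
      intro p hp
      rcases hcase with h | h <;> subst h <;>
        rcases Finset.mem_insert.mp hp with rfl | hp <;>
        [exact ⟨by simpa using hfi, by simpa using hfl⟩;
         skip;
         exact ⟨by simpa using hfi, by simpa using hfm⟩;
         skip] <;>
        rcases Finset.mem_insert.mp hp with rfl | hp <;>
        first
        | exact ⟨by simpa using hfj, by simpa using hfm⟩
        | exact ⟨by simpa using hfl, by simpa using hfj⟩
        | exact hffix _ (Finset.mem_of_mem_erase (Finset.mem_of_mem_erase hp))
    · right
      refine ⟨i, j, l, m, Finset.mem_insert_of_mem hij, Finset.mem_insert_of_mem hlm,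
        hil, hlj, hjm, ?_⟩
      rcases hcase with h | h
      · exact Or.inl (by
          rw [herase, h, Finset.insert_comm (f, n + 1) (i, l),
            Finset.insert_comm (f, n + 1) (j, m)])
      · exact Or.inr (by
          rw [herase, h, Finset.insert_comm (f, n + 1) (i, m),
            Finset.insert_comm (f, n + 1) (l, j)])

end LinkPatterns
end

section
/- Let σ ∈ I_{n,k}^max and let ω ∈ I_{n,k} with ω ≤ σ and ω ≠ σ. Then: (a) for every arc (a,b) ∈ ω and fixed point f of ω with a<f<b, at least one of ω⁻_{(a,b)}(a,f) and ω⁻_{(a,b)}(f,b) is ≤ σ; (b) for every pair of crossing arcs (a,c),(b,d) ∈ ω with a<b<c<d, at least one of ω⁻_{(a,c),(b,d)}(a,b)(c,d) and ω⁻_{(a,c),(b,d)}(a,d)(b,c) is ≤ σ. Equivalently, for every pair of predecessors of ω arising from the same elementary move data, at least one belongs to G_σ = {υ ∈ I_{n,k} : υ ≤ σ}. -/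
/- Link patterns: an involution in `I_{n,k}` (k disjoint 2-cycles in S_n) is identified
with its set of arcs, a finset of pairs `(i,j)` with `1 ≤ i < j ≤ n`, pairwise disjoint
endpoints, of cardinality `k`. -/

attribute [local instance] Classical.propDecidable

namespace LinkPatterns

/-! If neither predecessor were `≤ σ`, each failure would give an interval on which `ω` and `σ`
have the same number of arcs (a tight interval). The two intervals `[x, y]` and `[x', y']`
overlap in a middle zone `M = [x', y]`, an arc of `ω` joins the two outer zones, and some point
`g ∈ M` is not joined by `ω` to any point of `[x, y']`. The number of points of `M` joined within
`[x, y']` is `R[x,y] + R[x',y'] - R[x,x'-1] - R[y+1,y']`, so it is at least as large for `ω` as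
for `σ`. Modularity of `R` forces `σ` to have an arc joining the outer zones too, and as `σ` has
no crossing and no fixed point under an arc, every point of `M` is joined by `σ` within that arc:
`σ` joins all of `M`, `ω` misses `g`, a contradiction. -/

open Finset

section LinkPattern

variable {n : ℕ} {τ : Finset (ℕ × ℕ)}

theorem IsLinkPattern.fst_lt_snd (hτ : IsLinkPattern n τ) {p : ℕ × ℕ} (hp : p ∈ τ) :
    p.1 < p.2 :=
  (hτ.1 p hp).2.1

theorem IsLinkPattern.eq_of_endpoint (hτ : IsLinkPattern n τ) {p q : ℕ × ℕ} (hp : p ∈ τ)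
    (hq : q ∈ τ) (h : p.1 = q.1 ∨ p.1 = q.2 ∨ p.2 = q.1 ∨ p.2 = q.2) : p = q := by
  by_contra hne
  have := hτ.2 p hp q hq hne
  tauto

theorem IsLinkPattern.snd_eq_of_mem (hτ : IsLinkPattern n τ) {i j l : ℕ} (h₁ : (i, j) ∈ τ)
    (h₂ : (i, l) ∈ τ) : j = l :=
  (Prod.ext_iff.1 (hτ.eq_of_endpoint h₁ h₂ (Or.inl rfl))).2

theorem IsLinkPattern.fst_eq_of_mem (hτ : IsLinkPattern n τ) {i j l : ℕ} (h₁ : (i, j) ∈ τ)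
    (h₂ : (l, j) ∈ τ) : i = l :=
  (Prod.ext_iff.1 (hτ.eq_of_endpoint h₁ h₂ (Or.inr (Or.inr (Or.inr rfl))))).1

end LinkPattern

section RInt

variable {τ : Finset (ℕ × ℕ)}

theorem RInt_eq_sum (τ : Finset (ℕ × ℕ)) (s t : ℕ) :
    RInt τ s t = ∑ p ∈ τ, if s ≤ p.1 ∧ p.2 ≤ t then 1 else 0 :=
  card_filter _ _

theorem RInt_insert {q : ℕ × ℕ} (hq : q ∉ τ) (s t : ℕ) :
    RInt (insert q τ) s t = RInt τ s t + if s ≤ q.1 ∧ q.2 ≤ t then 1 else 0 := by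
  rw [RInt_eq_sum, RInt_eq_sum, sum_insert hq, add_comm]

theorem RInt_erase_add {p : ℕ × ℕ} (hp : p ∈ τ) (s t : ℕ) :
    RInt (τ.erase p) s t + (if s ≤ p.1 ∧ p.2 ≤ t then 1 else 0) = RInt τ s t := by
  rw [RInt_eq_sum, RInt_eq_sum]
  exact sum_erase_add _ _ hp

theorem RInt_add_RInt (τ : Finset (ℕ × ℕ)) {x x' y y' : ℕ} (hx : x ≤ x') (hy : y ≤ y') :
    RInt τ x y' + RInt τ x' y =
      RInt τ x y + RInt τ x' y' + #{p ∈ τ | x ≤ p.1 ∧ p.1 < x' ∧ y < p.2 ∧ p.2 ≤ y'} := by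
  simp only [RInt_eq_sum, card_filter, ← sum_add_distrib]
  refine sum_congr rfl fun p _ => ?_
  split_ifs <;> omega

theorem lpLE.RInt_le {n : ℕ} {υ σ : Finset (ℕ × ℕ)} (hle : lpLE n υ σ)
    (hυ : IsLinkPattern n υ) {s t : ℕ} (hs : 1 ≤ s) (ht : t ≤ n) :
    RInt υ s t ≤ RInt σ s t := by
  rcases lt_or_ge s t with hst | hts
  · exact hle s t hs hst ht
  · have : RInt υ s t = 0 := card_eq_zero.2 <| filter_eq_empty_iff.2 fun p hp h => by
      have := hυ.fst_lt_snd hp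
      omega
    omega

end RInt

noncomputable def matchedWithin (τ : Finset (ℕ × ℕ)) (x y : ℕ) (M : Finset ℕ) : Finset ℕ :=
  {z ∈ M | ∃ p ∈ τ, x ≤ p.1 ∧ p.2 ≤ y ∧ (p.1 = z ∨ p.2 = z)}

theorem card_filter_eq_or_eq {a b : ℕ} (hab : a ≠ b) (M : Finset ℕ) :
    #{z ∈ M | a = z ∨ b = z} = (if a ∈ M then 1 else 0) + (if b ∈ M then 1 else 0) := by
  rw [filter_or, card_union_of_disjoint, filter_eq, filter_eq]
  · split_ifs <;> rfl
  · exact disjoint_filter.2 fun z _ ha hb => hab (ha.trans hb.symm)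

theorem card_matchedWithin {n : ℕ} {τ : Finset (ℕ × ℕ)} (hτ : IsLinkPattern n τ)
    (x y : ℕ) (M : Finset ℕ) :
    #(matchedWithin τ x y M) =
      ∑ p ∈ τ with x ≤ p.1 ∧ p.2 ≤ y, #{z ∈ M | p.1 = z ∨ p.2 = z} := by
  rw [← card_biUnion]
  · congr 1
    ext z
    simp only [matchedWithin, mem_filter, mem_biUnion]
    constructor
    · rintro ⟨hz, p, hp, hx, hy, hpz⟩
      exact ⟨p, ⟨hp, hx, hy⟩, hz, hpz⟩
    · rintro ⟨p, ⟨hp, hx, hy⟩, hz, hpz⟩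
      exact ⟨hz, p, hp, hx, hy, hpz⟩
  · intro p hp q hq hpq
    have := hτ.2 p (mem_filter.1 hp).1 q (mem_filter.1 hq).1 hpq
    refine disjoint_filter_filter' _ _ ?_
    intro P hpP hqP z hz
    have h₁ := hpP z hz
    have h₂ := hqP z hz
    simp only at h₁ h₂ ⊢
    omega

theorem card_matchedWithin_Icc {n : ℕ} {τ : Finset (ℕ × ℕ)} (hτ : IsLinkPattern n τ)
    {x x' y y' : ℕ} (hx : x ≤ x') (hxy : x' ≤ y + 1) (hy : y ≤ y') :
    #(matchedWithin τ x y' (Icc x' y)) + RInt τ x (x' - 1) + RInt τ (y + 1) y' =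
      RInt τ x y + RInt τ x' y' := by
  rw [card_matchedWithin hτ, sum_filter]
  simp only [RInt_eq_sum, ← sum_add_distrib]
  refine sum_congr rfl fun p hp => ?_
  have := hτ.fst_lt_snd hp
  rw [card_filter_eq_or_eq this.ne]
  simp only [mem_Icc]
  split_ifs <;> omega

section Maximal

variable {n : ℕ} {σ : Finset (ℕ × ℕ)}

theorem IsMaximal.not_lt_of_mem_fixedPts (hσ : IsMaximal n σ) {p : ℕ × ℕ} (hp : p ∈ σ)
    {f : ℕ} (hf : f ∈ fixedPts n σ) : ¬ (p.1 < f ∧ f < p.2) :=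
  filter_eq_empty_iff.1 (card_eq_zero.1 hσ.2.1)
    (show (p, f) ∈ σ ×ˢ fixedPts n σ from mem_product.2 ⟨hp, hf⟩)

theorem IsMaximal.not_crossing (hσ : IsMaximal n σ) {p q : ℕ × ℕ} (hp : p ∈ σ) (hq : q ∈ σ) :
    ¬ (p.1 < q.1 ∧ q.1 < p.2 ∧ p.2 < q.2) :=
  filter_eq_empty_iff.1 (card_eq_zero.1 hσ.2.2) (show (p, q) ∈ σ ×ˢ σ from mem_product.2 ⟨hp, hq⟩)

theorem IsMaximal.exists_nested_arc_through (hσ : IsMaximal n σ) {q : ℕ × ℕ} (hq : q ∈ σ) {z : ℕ}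
    (hqz : q.1 < z) (hzq : z < q.2) :
    ∃ p ∈ σ, q.1 ≤ p.1 ∧ p.2 ≤ q.2 ∧ (p.1 = z ∨ p.2 = z) := by
  have hz : z ∉ fixedPts n σ := fun hf => hσ.not_lt_of_mem_fixedPts hq hf ⟨hqz, hzq⟩
  have hzn : z ∈ Icc 1 n := by
    have := hσ.1.1 q hq
    exact mem_Icc.2 ⟨by omega, by omega⟩
  simp only [fixedPts, mem_filter, hzn, true_and, not_forall, not_and_or, not_not] at hz
  obtain ⟨p, hp, hpz⟩ := hz
  have hpq := hσ.not_crossing hp hq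
  have hqp := hσ.not_crossing hq hp
  have := hσ.1.fst_lt_snd hp
  exact ⟨p, hp, by omega, by omega, hpz⟩

theorem IsMaximal.false_of_tight_overlap (hσ : IsMaximal n σ) {ω : Finset (ℕ × ℕ)}
    (hω : IsLinkPattern n ω) (hle : lpLE n ω σ) {x x' y y' α β g : ℕ} (hx : 1 ≤ x)
    (hy' : y' ≤ n) (hxα : x ≤ α) (hαx' : α < x') (hx'g : x' ≤ g) (hgy : g ≤ y) (hyβ : y < β)
    (hβy' : β ≤ y') (hαβ : (α, β) ∈ ω) (hg : ∀ p ∈ ω, (p.1 = g ∨ p.2 = g) → p.1 < x ∨ y' < p.2)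
    (hI : RInt ω x y = RInt σ x y) (hJ : RInt ω x' y' = RInt σ x' y') : False := by
  obtain ⟨q, hq, hxq, hqx', hyq, hqy'⟩ : ∃ q ∈ σ, x ≤ q.1 ∧ q.1 < x' ∧ y < q.2 ∧ q.2 ≤ y' := by
    have hω₁ : 0 < #{p ∈ ω | x ≤ p.1 ∧ p.1 < x' ∧ y < p.2 ∧ p.2 ≤ y'} :=
      card_pos.2 ⟨(α, β), mem_filter.2 ⟨hαβ, hxα, hαx', hyβ, hβy'⟩⟩
    have := RInt_add_RInt ω (x := x) (x' := x') (y := y) (y' := y') (by omega) (by omega)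
    have := RInt_add_RInt σ (x := x) (x' := x') (y := y) (y' := y') (by omega) (by omega)
    have := hle.RInt_le hω hx hy'
    have := hle.RInt_le hω (s := x') (t := y) (by omega) (by omega)
    obtain ⟨q, hq⟩ := card_pos.1 (by omega : 0 < #{p ∈ σ | x ≤ p.1 ∧ p.1 < x' ∧ y < p.2 ∧ p.2 ≤ y'})
    exact ⟨q, (mem_filter.1 hq).1, (mem_filter.1 hq).2⟩
  have hσM : matchedWithin σ x y' (Icc x' y) = Icc x' y := filter_true_of_mem fun z hz => by
    have := mem_Icc.1 hz
    obtain ⟨p, hp, hqp, hpq, hpz⟩ := hσ.exists_nested_arc_through hq (z := z) (by omega) (by omega)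
    exact ⟨p, hp, by omega, by omega, hpz⟩
  have hωM : #(matchedWithin ω x y' (Icc x' y)) < #(Icc x' y) := by
    refine card_lt_card (filter_ssubset.2 ⟨g, mem_Icc.2 ⟨hx'g, hgy⟩, ?_⟩)
    rintro ⟨p, hp, hxp, hpy', hpg⟩
    have := hg p hp hpg
    omega
  have hcountσ := card_matchedWithin_Icc hσ.1 (x := x) (x' := x') (y := y) (y' := y')
    (by omega) (by omega) (by omega)
  have hcountω := card_matchedWithin_Icc hω (x := x) (x' := x') (y := y) (y' := y')
    (by omega) (by omega) (by omega)
  rw [hσM] at hcountσ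
  have := hle.RInt_le hω (s := x) (t := x' - 1) hx (by omega)
  have := hle.RInt_le hω (s := y + 1) (t := y') (by omega) hy'
  omega

end Maximal

section Moves

variable {n : ℕ} {ω σ : Finset (ℕ × ℕ)}

theorem exists_tight_of_not_lpLE_replace (hle : lpLE n ω σ) {p q : ℕ × ℕ} (hp : p ∈ ω)
    (hq : q ∉ ω) (hfail : ¬ lpLE n (insert q (ω.erase p)) σ) :
    ∃ s t, 1 ≤ s ∧ t ≤ n ∧ s ≤ q.1 ∧ q.2 ≤ t ∧ ¬ (s ≤ p.1 ∧ p.2 ≤ t) ∧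
      RInt ω s t = RInt σ s t := by
  simp only [lpLE, not_forall, not_le] at hfail
  obtain ⟨s, t, hs, hst, ht, hlt⟩ := hfail
  rw [RInt_insert (fun h => hq (mem_of_mem_erase h))] at hlt
  have hmove := RInt_erase_add hp s t
  have := hle s t hs hst ht
  refine ⟨s, t, hs, ht, ?_⟩
  split_ifs at hlt hmove <;> omega

theorem exists_tight_of_not_lpLE_replace₂ (hle : lpLE n ω σ) {p₁ p₂ q₁ q₂ : ℕ × ℕ}
    (hp₁ : p₁ ∈ ω) (hp₂ : p₂ ∈ ω) (hp : p₁ ≠ p₂) (hq₁ : q₁ ∉ ω) (hq₂ : q₂ ∉ ω) (hq : q₁ ≠ q₂)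
    (hfail : ¬ lpLE n (insert q₁ (insert q₂ ((ω.erase p₁).erase p₂))) σ) :
    ∃ s t, 1 ≤ s ∧ t ≤ n ∧ RInt ω s t ≤ RInt σ s t ∧
      RInt σ s t + (if s ≤ p₁.1 ∧ p₁.2 ≤ t then 1 else 0) + (if s ≤ p₂.1 ∧ p₂.2 ≤ t then 1 else 0) <
        RInt ω s t + (if s ≤ q₁.1 ∧ q₁.2 ≤ t then 1 else 0) +
          (if s ≤ q₂.1 ∧ q₂.2 ≤ t then 1 else 0) := by
  simp only [lpLE, not_forall, not_le] at hfail
  obtain ⟨s, t, hs, hst, ht, hlt⟩ := hfail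
  have hq₂' : q₂ ∉ (ω.erase p₁).erase p₂ := fun h => hq₂ (mem_of_mem_erase (mem_of_mem_erase h))
  have hq₁' : q₁ ∉ insert q₂ ((ω.erase p₁).erase p₂) := by
    rw [mem_insert, not_or]
    exact ⟨hq, fun h => hq₁ (mem_of_mem_erase (mem_of_mem_erase h))⟩
  rw [RInt_insert hq₁', RInt_insert hq₂'] at hlt
  have h₂ := RInt_erase_add (mem_erase.2 ⟨hp.symm, hp₂⟩) s t
  have h₁ := RInt_erase_add hp₁ s t
  exact ⟨s, t, hs, ht, hle s t hs hst ht, by omega⟩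

theorem exists_tight_of_not_lpLE_uncross (hω : IsLinkPattern n ω) (hle : lpLE n ω σ)
    {a b c d : ℕ} (hac : (a, c) ∈ ω) (hbd : (b, d) ∈ ω) (hab : a < b) (hbc : b < c) (hcd : c < d)
    (hfail : ¬ lpLE n (insert (a, b) (insert (c, d) ((ω.erase (a, c)).erase (b, d)))) σ) :
    ∃ s t, 1 ≤ s ∧ t ≤ n ∧ ((s ≤ a ∧ b ≤ t ∧ t < c) ∨ (b < s ∧ s ≤ c ∧ d ≤ t)) ∧
      RInt ω s t = RInt σ s t := by
  obtain ⟨s, t, hs, ht, hωσ, hlt⟩ := exists_tight_of_not_lpLE_replace₂ hle hac hbd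
    (by simp only [ne_eq, Prod.mk.injEq]; omega) (fun h => hbc.ne (hω.snd_eq_of_mem h hac))
    (fun h => hbc.ne' (hω.fst_eq_of_mem h hbd)) (by simp only [ne_eq, Prod.mk.injEq]; omega)
    hfail
  exact ⟨s, t, hs, ht, by split_ifs at hlt <;> omega⟩

theorem exists_tight_of_not_lpLE_nest (hω : IsLinkPattern n ω) (hle : lpLE n ω σ)
    {a b c d : ℕ} (hac : (a, c) ∈ ω) (hbd : (b, d) ∈ ω) (hab : a < b) (hcd : c < d)
    (hfail : ¬ lpLE n (insert (a, d) (insert (b, c) ((ω.erase (a, c)).erase (b, d)))) σ) :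
    ∃ s t, 1 ≤ s ∧ t ≤ n ∧ a < s ∧ s ≤ b ∧ c ≤ t ∧ t < d ∧ RInt ω s t = RInt σ s t := by
  obtain ⟨s, t, hs, ht, hωσ, hlt⟩ := exists_tight_of_not_lpLE_replace₂ hle hac hbd
    (by simp only [ne_eq, Prod.mk.injEq]; omega) (fun h => hcd.ne' (hω.snd_eq_of_mem h hac))
    (fun h => hcd.ne (hω.snd_eq_of_mem h hbd)) (by simp only [ne_eq, Prod.mk.injEq]; omega)
    hfail
  exact ⟨s, t, hs, ht, by split_ifs at hlt <;> omega⟩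

end Moves

theorem one_predecessor_in_graph_general (n : ℕ) (σ ω : Finset (ℕ × ℕ))
    (hσ : IsMaximal n σ) (hω : IsLinkPattern n ω) (hle : lpLE n ω σ) :
    (∀ a b f : ℕ, (a, b) ∈ ω → f ∈ fixedPts n ω → a < f → f < b →
      lpLE n (insert (a, f) (ω.erase (a, b))) σ ∨
      lpLE n (insert (f, b) (ω.erase (a, b))) σ) ∧
    (∀ a b c d : ℕ, (a, c) ∈ ω → (b, d) ∈ ω → a < b → b < c → c < d →
      lpLE n (insert (a, b) (insert (c, d) ((ω.erase (a, c)).erase (b, d)))) σ ∨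
      lpLE n (insert (a, d) (insert (b, c) ((ω.erase (a, c)).erase (b, d)))) σ) := by
  constructor
  · intro a b f hab hf haf hfb
    have hfree : ∀ p ∈ ω, p.1 ≠ f ∧ p.2 ≠ f := (mem_filter.1 hf).2
    by_contra! ⟨hfail₁, hfail₂⟩
    obtain ⟨s, t, hs, -, hsa, hft, htb, hI⟩ :=
      exists_tight_of_not_lpLE_replace hle hab (fun h => (hfree _ h).2 rfl) hfail₁
    obtain ⟨s', t', -, ht', hs'f, hbt', has', hJ⟩ :=
      exists_tight_of_not_lpLE_replace hle hab (fun h => (hfree _ h).1 rfl) hfail₂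
    exact hσ.false_of_tight_overlap hω hle hs ht' hsa (by omega) hs'f hft (by omega) hbt' hab
      (fun p hp hpf => by have := hfree p hp; omega) hI hJ
  · intro a b c d hac hbd hab hbc hcd
    by_contra! ⟨hfail₁, hfail₂⟩
    obtain ⟨s, t, hs, ht, hst, hI⟩ :=
      exists_tight_of_not_lpLE_uncross hω hle hac hbd hab hbc hcd hfail₁
    obtain ⟨s', t', hs', ht', has', hs'b, hct', ht'd, hJ⟩ :=
      exists_tight_of_not_lpLE_nest hω hle hac hbd hab hcd hfail₂
    rcases hst with ⟨hsa, hbt, htc⟩ | ⟨hbs, hsc, hdt⟩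
    · refine hσ.false_of_tight_overlap hω hle hs ht' hsa has' hs'b hbt htc hct' hac
        (fun p hp hpb => ?_) hI hJ
      obtain rfl := hω.eq_of_endpoint hp hbd (by simp only; omega)
      omega
    · refine hσ.false_of_tight_overlap hω hle hs' ht hs'b hbs hsc hct' ht'd hdt hbd
        (fun p hp hpc => ?_) hJ hI
      obtain rfl := hω.eq_of_endpoint hp hac (by simp only; omega)
      omega

/-- for maximal `σ` and `ω ≤ σ`, `ω ≠ σ`, from every pair of predecessors of
`ω` arising from the same elementary move data, at least one is `≤ σ`. -/
theorem one_predecessor_in_graph (n k : ℕ) (hnk : 2 * k ≤ n) (σ ω : Finset (ℕ × ℕ))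
    (hσ : IsMaximal n σ) (hσk : σ.card = k)
    (hω : IsLinkPattern n ω) (hωk : ω.card = k) (hle : lpLE n ω σ) (hne : ω ≠ σ) :
    (∀ a b f : ℕ, (a, b) ∈ ω → f ∈ fixedPts n ω → a < f → f < b →
      lpLE n (insert (a, f) (ω.erase (a, b))) σ ∨
      lpLE n (insert (f, b) (ω.erase (a, b))) σ) ∧
    (∀ a b c d : ℕ, (a, c) ∈ ω → (b, d) ∈ ω → a < b → b < c → c < d →
      lpLE n (insert (a, b) (insert (c, d) ((ω.erase (a, c)).erase (b, d)))) σ ∨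
      lpLE n (insert (a, d) (insert (b, c) ((ω.erase (a, c)).erase (b, d)))) σ) :=
  one_predecessor_in_graph_general n σ ω hσ hω hle

end LinkPatterns
end

section
/- Let σ ∈ I_{n,k}^max have an admissible pair (i,j),(i',j') at [1,n]; let m be the number of fixed points of σ in [j,i'] and r the number of arcs of σ lying over both (i,j) and (i',j'). Put υ = (1,n)(i,j')σ⁻_{(i,j),(i',j')}. Then υ ≤ σ and b(υ) + c(υ) = b(σ) + c(σ) + 4 + 2(m+r); that is, the codimension of 𝓕_υ in 𝓕_σ equals 4 + 2(m+r). -/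
/- Link patterns: an involution in `I_{n,k}` (k disjoint 2-cycles in S_n) is identified
with its set of arcs, a finset of pairs `(i,j)` with `1 ≤ i < j ≤ n`, pairwise disjoint
endpoints, of cardinality `k`. -/

attribute [local instance] Classical.propDecidable

namespace LinkPatterns

/-- for an admissible pair `(i,j),(i',j')` of `σ` at `[1,n]`, the link pattern
`υ = (1,n)(i,j')σ⁻_{(i,j),(i',j')}` satisfies `υ ≤ σ` and
`b(υ)+c(υ) = b(σ)+c(σ)+4+2(m+r)`. -/
theorem admissible_pair_codim (n k : ℕ) (hnk : 2 * k ≤ n) (σ : Finset (ℕ × ℕ))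
    (hσ : IsMaximal n σ) (hσk : σ.card = k)
    (i j i' j' : ℕ) (hadm : AdmissiblePair n σ i j i' j') :
    lpLE n (insert (1, n) (insert (i, j') ((σ.erase (i, j)).erase (i', j')))) σ ∧
    bridges n (insert (1, n) (insert (i, j') ((σ.erase (i, j)).erase (i', j')))) +
        crossings (insert (1, n) (insert (i, j') ((σ.erase (i, j)).erase (i', j'))))
      = bridges n σ + crossings σ + 4 +
        2 * (((fixedPts n σ).filter (fun f => j ≤ f ∧ f ≤ i')).card +
             (σ.filter (fun p => p.1 < i ∧ j' < p.2)).card) := by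
  obtain ⟨hLP, hb0, hc0⟩ := hσ
  obtain ⟨hij, hij', h1i, hij2, hji', hi'j', hj'n, h1fix, hnfix, hfixint, hnc, hover, hnest,
    hmr⟩ := hadm
  set F := (fixedPts n σ).filter (fun f => j ≤ f ∧ f ≤ i') with hF
  set R := σ.filter (fun p => p.1 < i ∧ j' < p.2) with hR
  set σ' := (σ.erase (i, j)).erase (i', j') with hσ'
  set υ := insert (1, n) (insert (i, j') σ') with hυ
  have hbd : ∀ p ∈ σ, 1 ≤ p.1 ∧ p.1 < p.2 ∧ p.2 ≤ n := hLP.1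
  have hdist := hLP.2
  -- pointwise consequences of maximality
  have hbσ : ∀ p ∈ σ, ∀ f ∈ fixedPts n σ, ¬(p.1 < f ∧ f < p.2) := by
    intro p hp f hf hcc
    have hmem : ((p, f) : (ℕ × ℕ) × ℕ)
        ∈ (σ ×ˢ fixedPts n σ).filter (fun q => q.1.1 < q.2 ∧ q.2 < q.1.2) := by
      simp only [Finset.mem_filter, Finset.mem_product]
      exact ⟨⟨hp, hf⟩, hcc⟩
    have h0 : ((σ ×ˢ fixedPts n σ).filter (fun q => q.1.1 < q.2 ∧ q.2 < q.1.2)).card = 0 := hb0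
    rw [Finset.card_eq_zero] at h0
    rw [h0] at hmem
    exact absurd hmem (Finset.notMem_empty _)
  have hcσ : ∀ p ∈ σ, ∀ q ∈ σ, ¬(p.1 < q.1 ∧ q.1 < p.2 ∧ p.2 < q.2) := by
    intro p hp q hq hcc
    have hmem : ((p, q) : (ℕ × ℕ) × (ℕ × ℕ))
        ∈ (σ ×ˢ σ).filter (fun q => q.1.1 < q.2.1 ∧ q.2.1 < q.1.2 ∧ q.1.2 < q.2.2) := by
      simp only [Finset.mem_filter, Finset.mem_product]
      exact ⟨⟨hp, hq⟩, hcc⟩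
    have h0 : ((σ ×ˢ σ).filter
        (fun q => q.1.1 < q.2.1 ∧ q.2.1 < q.1.2 ∧ q.1.2 < q.2.2)).card = 0 := hc0
    rw [Finset.card_eq_zero] at h0
    rw [h0] at hmem
    exact absurd hmem (Finset.notMem_empty _)
  have hfix_mem : ∀ f, f ∈ fixedPts n σ ↔ (1 ≤ f ∧ f ≤ n) ∧ ∀ p ∈ σ, p.1 ≠ f ∧ p.2 ≠ f := by
    intro f
    simp only [fixedPts, Finset.mem_filter, Finset.mem_Icc]
  have h1σ : ∀ p ∈ σ, p.1 ≠ 1 ∧ p.2 ≠ 1 := ((hfix_mem 1).1 h1fix).2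
  have hmemυ : ∀ p, p ∈ υ ↔ p = (1, n) ∨ p = (i, j') ∨ (p ∈ σ ∧ p ≠ (i, j) ∧ p ≠ (i', j')) := by
    intro p
    simp only [hυ, hσ', Finset.mem_insert, Finset.mem_erase]
    tauto
  have hne_ij : ∀ p ∈ σ, p ≠ (i, j) → p.1 ≠ i ∧ p.1 ≠ j ∧ p.2 ≠ i ∧ p.2 ≠ j :=
    fun p hp hne => hdist p hp (i, j) hij hne
  have hne_ij' : ∀ p ∈ σ, p ≠ (i', j') → p.1 ≠ i' ∧ p.1 ≠ j' ∧ p.2 ≠ i' ∧ p.2 ≠ j' :=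
    fun p hp hne => hdist p hp (i', j') hij' hne
  have hiji' : ((i, j) : ℕ × ℕ) ≠ (i', j') := by
    intro h
    have : i = i' := congrArg Prod.fst h
    omega
  have covj : ∀ p ∈ σ, p ≠ (i, j) → p.1 < j → j < p.2 → p.1 < i ∧ j' < p.2 := by
    intro p hp hne h1 h2
    rcases lt_trichotomy p.1 i with h | h | h
    · exact hover p hp (Or.inl ⟨h, by omega⟩)
    · exact absurd h (hne_ij p hp hne).1
    · exact absurd ⟨h, h1, h2⟩ (hnc p hp).2.1
  have covi' : ∀ p ∈ σ, p ≠ (i', j') → p.1 < i' → i' < p.2 → p.1 < i ∧ j' < p.2 := by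
    intro p hp hne h1 h2
    rcases lt_trichotomy p.2 j' with h | h | h
    · exact absurd ⟨h1, h2, h⟩ (hnc p hp).2.2.1
    · exact absurd h (hne_ij' p hp hne).2.2.2
    · exact hover p hp (Or.inr ⟨h1, h⟩)
  have hjnf : j ∉ fixedPts n σ := by
    intro h
    exact (((hfix_mem j).1 h).2 (i, j) hij).2 rfl
  have hi'nf : i' ∉ fixedPts n σ := by
    intro h
    exact (((hfix_mem i').1 h).2 (i', j') hij').1 rfl
  have hFmem : ∀ f, f ∈ F ↔ f ∈ fixedPts n σ ∧ j ≤ f ∧ f ≤ i' := by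
    intro f
    simp only [hF, Finset.mem_filter]
  have hFj : j ∉ F := fun h => hjnf ((hFmem j).1 h).1
  have hFi' : i' ∉ F := fun h => hi'nf ((hFmem i').1 h).1
  have hRmem : ∀ p, p ∈ R ↔ p ∈ σ ∧ p.1 < i ∧ j' < p.2 := by
    intro p
    simp only [hR, Finset.mem_filter]
  have hRne : ∀ p ∈ R, p ≠ (i, j) ∧ p ≠ (i', j') := by
    intro p hp
    obtain ⟨hpσ, h1, h2⟩ := (hRmem p).1 hp
    constructor
    · rintro rfl
      exact absurd h1 (lt_irrefl i)
    · rintro rfl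
      have : i' < i := h1
      omega
  have hfix_memυ : ∀ f, f ∈ fixedPts n υ ↔ (1 ≤ f ∧ f ≤ n) ∧ ∀ p ∈ υ, p.1 ≠ f ∧ p.2 ≠ f := by
    intro f
    simp only [fixedPts, Finset.mem_filter, Finset.mem_Icc]
  -- fixed points of υ
  have hfixυ : fixedPts n υ = insert j (insert i' F) := by
    ext f
    rw [hfix_memυ]
    simp only [Finset.mem_insert]
    constructor
    · rintro ⟨hb, hall⟩
      have hA := hall (1, n) ((hmemυ _).2 (Or.inl rfl))
      have hB := hall (i, j') ((hmemυ _).2 (Or.inr (Or.inl rfl)))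
      have hA1 : (1 : ℕ) ≠ f := hA.1
      have hA2 : n ≠ f := hA.2
      have hB1 : i ≠ f := hB.1
      have hB2 : j' ≠ f := hB.2
      by_cases hfσ : f ∈ fixedPts n σ
      · right; right
        exact (hFmem f).2 ⟨hfσ, hfixint f hfσ (fun h => hA1 h.symm) (fun h => hA2 h.symm)⟩
      · rw [hfix_mem] at hfσ
        push_neg at hfσ
        obtain ⟨p, hp, hpe⟩ := hfσ hb
        have hpf : p.1 = f ∨ p.2 = f := by
          by_cases h : p.1 = f
          · exact Or.inl h
          · exact Or.inr (hpe h)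
        by_cases hij0 : p = (i, j)
        · rw [hij0] at hpf
          rcases hpf with h | h
          · exact absurd h hB1
          · exact Or.inl h.symm
        by_cases hij'0 : p = (i', j')
        · rw [hij'0] at hpf
          rcases hpf with h | h
          · exact Or.inr (Or.inl h.symm)
          · exact absurd h hB2
        · have := hall p ((hmemυ p).2 (Or.inr (Or.inr ⟨hp, hij0, hij'0⟩)))
          tauto
    · rintro (hfj | hfi | hfF)
      · refine ⟨⟨by omega, by omega⟩, ?_⟩
        intro p hp
        rw [hmemυ] at hp
        rcases hp with rfl | rfl | ⟨hp, hne1, _⟩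
        · exact ⟨show (1 : ℕ) ≠ f by omega, show n ≠ f by omega⟩
        · exact ⟨show i ≠ f by omega, show j' ≠ f by omega⟩
        · have h := hne_ij p hp hne1
          rw [hfj]
          exact ⟨h.2.1, h.2.2.2⟩
      · refine ⟨⟨by omega, by omega⟩, ?_⟩
        intro p hp
        rw [hmemυ] at hp
        rcases hp with rfl | rfl | ⟨hp, _, hne2⟩
        · exact ⟨show (1 : ℕ) ≠ f by omega, show n ≠ f by omega⟩
        · exact ⟨show i ≠ f by omega, show j' ≠ f by omega⟩
        · have h := hne_ij' p hp hne2
          rw [hfi]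
          exact ⟨h.1, h.2.2.1⟩
      · obtain ⟨hfσ, hjf, hfi'⟩ := (hFmem f).1 hfF
        have hb := (hfix_mem f).1 hfσ
        refine ⟨hb.1, ?_⟩
        intro p hp
        rw [hmemυ] at hp
        rcases hp with rfl | rfl | ⟨hp, _, _⟩
        · exact ⟨show (1 : ℕ) ≠ f by omega, show n ≠ f by omega⟩
        · exact ⟨show i ≠ f by omega, show j' ≠ f by omega⟩
        · exact hb.2 p hp
  -- the bridge set of υ is a full product
  have hBset : (υ ×ˢ fixedPts n υ).filter (fun q => q.1.1 < q.2 ∧ q.2 < q.1.2)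
      = (insert (1, n) (insert (i, j') R)) ×ˢ (insert j (insert i' F)) := by
    rw [hfixυ]
    ext q
    simp only [Finset.mem_filter, Finset.mem_product, Finset.mem_insert]
    constructor
    · rintro ⟨⟨hq1, hq2⟩, hlt1, hlt2⟩
      refine ⟨?_, hq2⟩
      rw [hmemυ] at hq1
      rcases hq1 with h | h | ⟨hpσ, hne1, hne2⟩
      · exact Or.inl h
      · exact Or.inr (Or.inl h)
      · right; right
        rw [hRmem]
        refine ⟨hpσ, ?_⟩
        rcases hq2 with h2 | h2 | h2
        · exact covj q.1 hpσ hne1 (by omega) (by omega)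
        · exact covi' q.1 hpσ hne2 (by omega) (by omega)
        · exact absurd ⟨hlt1, hlt2⟩ (hbσ q.1 hpσ q.2 ((hFmem _).1 h2).1)
    · rintro ⟨hq1, hq2⟩
      have hT : j ≤ q.2 ∧ q.2 ≤ i' := by
        rcases hq2 with h | h | h
        · omega
        · omega
        · have := ((hFmem _).1 h).2
          omega
      refine ⟨⟨?_, hq2⟩, ?_⟩
      · rw [hmemυ]
        rcases hq1 with h | h | h
        · exact Or.inl h
        · exact Or.inr (Or.inl h)
        · obtain ⟨hpσ, _, _⟩ := (hRmem _).1 h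
          exact Or.inr (Or.inr ⟨hpσ, (hRne _ h).1, (hRne _ h).2⟩)
      · rcases hq1 with h | h | h
        · rw [h]
          exact ⟨show (1 : ℕ) < q.2 by omega, show q.2 < n by omega⟩
        · rw [h]
          exact ⟨show i < q.2 by omega, show q.2 < j' by omega⟩
        · obtain ⟨hpσ, ha, hb⟩ := (hRmem _).1 h
          exact ⟨by omega, by omega⟩
  have hcard1 : ((1, n) : ℕ × ℕ) ∉ insert (i, j') R := by
    simp only [Finset.mem_insert]
    rintro (h | h)
    · have : (1 : ℕ) = i := congrArg Prod.fst h
      omega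
    · exact (h1σ _ ((hRmem _).1 h).1).1 rfl
  have hcard2 : ((i, j') : ℕ × ℕ) ∉ R := by
    intro h
    exact absurd ((hRmem _).1 h).2.1 (lt_irrefl i)
  have hcard3 : j ∉ insert i' F := by
    simp only [Finset.mem_insert]
    rintro (h | h)
    · omega
    · exact hFj h
  have hbrυ : bridges n υ = (R.card + 2) * (F.card + 2) := by
    have : bridges n υ
        = ((insert (1, n) (insert (i, j') R)) ×ˢ (insert j (insert i' F))).card := by
      simp only [bridges]
      rw [hBset]
    rw [this, Finset.card_product, Finset.card_insert_of_notMem hcard1,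
      Finset.card_insert_of_notMem hcard2, Finset.card_insert_of_notMem hcard3,
      Finset.card_insert_of_notMem hFi']
  -- crossings of υ vanish
  have hcυ : crossings υ = 0 := by
    simp only [crossings]
    rw [Finset.card_eq_zero, Finset.filter_eq_empty_iff]
    intro q hq
    simp only [Finset.mem_product] at hq
    obtain ⟨hp1, hp2⟩ := hq
    rintro ⟨l1, l2, l3⟩
    rw [hmemυ] at hp1 hp2
    rcases hp1 with h | h | ⟨hpσ, hpne1, hpne2⟩
    · have hn2 : q.2.2 ≤ n := by
        rcases hp2 with h2 | h2 | ⟨h2, _, _⟩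
        · rw [h2]
        · rw [h2]
          exact le_of_lt hj'n
        · exact (hbd _ h2).2.2
      rw [h] at l3
      have : n < q.2.2 := l3
      omega
    · rcases hp2 with h2 | h2 | ⟨hqσ, hqne1, hqne2⟩
      · rw [h, h2] at l1
        have : i < 1 := l1
        omega
      · rw [h, h2] at l1
        exact absurd l1 (lt_irrefl i)
      · rw [h] at l1 l2 l3
        have l1' : i < q.2.1 := l1
        have l2' : q.2.1 < j' := l2
        have l3' : j' < q.2.2 := l3
        have hne := hne_ij q.2 hqσ hqne1
        have hne' := hne_ij' q.2 hqσ hqne2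
        rcases lt_trichotomy q.2.1 j with hh | hh | hh
        · exact (hnc q.2 hqσ).2.1 ⟨l1', hh, by omega⟩
        · exact hne.2.1 hh
        · rcases lt_trichotomy q.2.1 i' with hh2 | hh2 | hh2
          · have := covi' q.2 hqσ hqne2 hh2 (by omega)
            omega
          · exact hne'.1 hh2
          · exact (hnc q.2 hqσ).2.2.2 ⟨hh2, l2', l3'⟩
    · rcases hp2 with h2 | h2 | ⟨hqσ, hqne1, hqne2⟩
      · rw [h2] at l1
        have hl : q.1.1 < 1 := l1
        have := (hbd _ hpσ).1
        omega
      · rw [h2] at l1 l2 l3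
        have l1' : q.1.1 < i := l1
        have l2' : i < q.1.2 := l2
        have l3' : q.1.2 < j' := l3
        have hne := hne_ij q.1 hpσ hpne1
        have hne' := hne_ij' q.1 hpσ hpne2
        rcases lt_trichotomy q.1.2 j with hh | hh | hh
        · exact (hnc q.1 hpσ).1 ⟨l1', l2', hh⟩
        · exact hne.2.2.2 hh
        · rcases lt_trichotomy q.1.2 i' with hh2 | hh2 | hh2
          · have := covj q.1 hpσ hpne1 (by omega) hh
            omega
          · exact hne'.2.2.1 hh2
          · exact (hnc q.1 hpσ).2.2.1 ⟨by omega, hh2, l3'⟩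
      · exact hcσ q.1 hpσ q.2 hqσ ⟨l1, l2, l3⟩
  -- υ ≤ σ
  have hle : lpLE n υ σ := by
    intro a b ha hab hbn
    simp only [RInt]
    by_cases hcase : a ≤ i ∧ j' ≤ b
    · have hA : υ.filter (fun p => a ≤ p.1 ∧ p.2 ≤ b)
          ⊆ insert (1, n) (insert (i, j') (σ'.filter (fun p => a ≤ p.1 ∧ p.2 ≤ b))) := by
        intro p hp
        simp only [Finset.mem_filter] at hp
        obtain ⟨hp1, hp2⟩ := hp
        rw [hmemυ] at hp1
        simp only [Finset.mem_insert, Finset.mem_filter]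
        rcases hp1 with h | h | ⟨h, h1, h2⟩
        · exact Or.inl h
        · exact Or.inr (Or.inl h)
        · refine Or.inr (Or.inr ⟨?_, hp2⟩)
          simp only [hσ', Finset.mem_erase]
          exact ⟨h2, h1, h⟩
      have hB : insert (i, j) (insert (i', j') (σ'.filter (fun p => a ≤ p.1 ∧ p.2 ≤ b)))
          ⊆ σ.filter (fun p => a ≤ p.1 ∧ p.2 ≤ b) := by
        intro p hp
        simp only [Finset.mem_insert, Finset.mem_filter, hσ', Finset.mem_erase] at hp ⊢
        rcases hp with rfl | rfl | ⟨⟨_, _, h⟩, h2⟩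
        · exact ⟨hij, hcase.1, by omega⟩
        · exact ⟨hij', by omega, hcase.2⟩
        · exact ⟨h, h2⟩
      have hm1 : ((i, j) : ℕ × ℕ) ∉ insert (i', j')
          (σ'.filter (fun p => a ≤ p.1 ∧ p.2 ≤ b)) := by
        simp only [Finset.mem_insert, Finset.mem_filter, hσ', Finset.mem_erase]
        rintro (h | ⟨⟨-, h, -⟩, -⟩)
        · exact hiji' h
        · exact h rfl
      have hm2 : ((i', j') : ℕ × ℕ) ∉ σ'.filter (fun p => a ≤ p.1 ∧ p.2 ≤ b) := by
        simp only [Finset.mem_filter, hσ', Finset.mem_erase]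
        rintro ⟨⟨h, -⟩, -⟩
        exact h rfl
      have e1 := Finset.card_insert_of_notMem hm1
      have e2 := Finset.card_insert_of_notMem hm2
      have hcB := Finset.card_le_card hB
      have hcA := Finset.card_le_card hA
      have hi1 := Finset.card_insert_le ((1, n) : ℕ × ℕ)
        (insert (i, j') (σ'.filter (fun p => a ≤ p.1 ∧ p.2 ≤ b)))
      have hi2 := Finset.card_insert_le ((i, j') : ℕ × ℕ)
        (σ'.filter (fun p => a ≤ p.1 ∧ p.2 ≤ b))
      omega
    · apply Finset.card_le_card
      intro p hp
      simp only [Finset.mem_filter] at hp ⊢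
      obtain ⟨hp1, hp2⟩ := hp
      rw [hmemυ] at hp1
      rcases hp1 with h | h | ⟨h, _, _⟩
      · exfalso
        rw [h] at hp2
        have h1 : a ≤ 1 := hp2.1
        have h2 : n ≤ b := hp2.2
        exact hcase ⟨by omega, by omega⟩
      · exfalso
        rw [h] at hp2
        exact hcase ⟨hp2.1, hp2.2⟩
      · exact ⟨h, hp2⟩
  refine ⟨hle, ?_⟩
  rw [hbrυ, hcυ, hb0, hc0]
  have h1 : R.card * F.card = 0 := by
    rw [Nat.mul_comm]
    exact hmr
  have hexp : (R.card + 2) * (F.card + 2) = R.card * F.card + 2 * R.card + 2 * F.card + 4 := by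
    ring
  rw [hexp, h1]
  omega

end LinkPatterns
end
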